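/- Let Ψ and g be as in the canonical construction, with λ and λ′ the sizes of the vertex label sets. If Θ is a clause minimum prime pure Horn CNF representation of g, then |Ψ|_c/(λ+λ′) ≤ |Θ|_c ≤ |Ψ|_c. -/

import Mathlib

open Finset

/-- A clause, given by its (fin)sets of positive and negative variables. -/
structure Clause (V : Type*) where
  pos : Finset V
  neg : Finset V
deriving DecidableEq

namespace Clause

variable {V : Type*}

/-- A genuine clause: no variable occurs both positively and negatively. -/
def IsClause (C : Clause V) : Prop := Disjoint C.pos C.neg

/-- Evaluation of a clause (as a disjunction of literals) under an assignment. -/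
def eval (C : Clause V) (a : V → Bool) : Prop :=
  (∃ v ∈ C.pos, a v = true) ∨ (∃ v ∈ C.neg, a v = false)

/-- A pure (definite) Horn clause: exactly one positive literal, its head. -/
def IsPureHorn (C : Clause V) : Prop := ∃ v, C.pos = {v}

end Clause

variable {V : Type*}

/-- Conjunction (as a predicate on assignments) of a set of clauses. -/
def evalSet (S : Set (Clause V)) (a : V → Bool) : Prop := ∀ C ∈ S, C.eval a

/-- Conjunction of the clauses of a CNF, i.e. of a finite set of clauses. -/
def evalCNF (Φ : Finset (Clause V)) (a : V → Bool) : Prop := ∀ C ∈ Φ, C.eval a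

/-- A CNF represents a Boolean function `h`. -/
def Represents (Φ : Finset (Clause V)) (h : (V → Bool) → Prop) : Prop :=
  ∀ a, evalCNF Φ a ↔ h a

/-- A pure Horn CNF: all clauses are pure Horn. -/
def IsPureHornCNF (Φ : Finset (Clause V)) : Prop :=
  ∀ C ∈ Φ, C.IsClause ∧ C.IsPureHorn

/-- The forward chaining closure of a set `Q` of variables with respect to the
pure Horn CNF `Φ`: the smallest set containing `Q` such that whenever `Φ` contains
a clause `S → v` with `S` inside the set, also `v` belongs to it. -/
def fcClosure (Φ : Finset (Clause V)) (Q : Set V) : Set V :=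
  ⋂₀ {T : Set V | Q ⊆ T ∧ ∀ C ∈ Φ, ∀ v : V, C.pos = {v} → ↑C.neg ⊆ T → v ∈ T}

/-- `C` is an implicate of `h`: every assignment falsifying `C` falsifies `h`. -/
def Implicate (h : (V → Bool) → Prop) (C : Clause V) : Prop :=
  ∀ a, ¬ C.eval a → ¬ h a

/-- `C` is a prime implicate of `h`: an implicate from which no literal can be
deleted while remaining an implicate. -/
def PrimeImplicate [DecidableEq V] (h : (V → Bool) → Prop) (C : Clause V) : Prop :=
  C.IsClause ∧ Implicate h C ∧
  (∀ v ∈ C.pos, ¬ Implicate h ⟨C.pos.erase v, C.neg⟩) ∧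
  (∀ v ∈ C.neg, ¬ Implicate h ⟨C.pos, C.neg.erase v⟩)

/-- `C₁` and `C₂` are resolvable on `v`: `v` occurs positively in `C₁`, negatively in
`C₂`, and no other variable occurs with opposite signs in them. -/
def Resolvable (C₁ C₂ : Clause V) (v : V) : Prop :=
  v ∈ C₁.pos ∧ v ∈ C₂.neg ∧
  ∀ w, w ≠ v → ¬(w ∈ C₁.pos ∧ w ∈ C₂.neg) ∧ ¬(w ∈ C₁.neg ∧ w ∈ C₂.pos)

/-- The resolvent `R(C₁,C₂) = (C₁ \ {v}) ∪ (C₂ \ {v̄})`. -/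
def resolventOf [DecidableEq V] (C₁ C₂ : Clause V) (v : V) : Clause V :=
  ⟨C₁.pos.erase v ∪ C₂.pos, C₁.neg ∪ C₂.neg.erase v⟩

/-- A set of clauses closed under resolution. -/
def ResClosed [DecidableEq V] (S : Set (Clause V)) : Prop :=
  ∀ C₁ ∈ S, ∀ C₂ ∈ S, ∀ v, Resolvable C₁ C₂ v → resolventOf C₁ C₂ v ∈ S

/-- The resolution closure of a set of clauses. -/
def resClosure [DecidableEq V] (S : Set (Clause V)) : Set (Clause V) :=
  ⋂₀ {T : Set (Clause V) | S ⊆ T ∧ ResClosed T}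

/-- `I(h)`: the resolution closure of the set of prime implicates of `h`. -/
def implSet [DecidableEq V] (h : (V → Bool) → Prop) : Set (Clause V) :=
  resClosure {C | PrimeImplicate h C}

/-- An exclusive set of clauses of `h`. -/
def ExclusiveSet [DecidableEq V] (h : (V → Bool) → Prop) (Xs : Set (Clause V)) : Prop :=
  Xs ⊆ implSet h ∧
  ∀ C₁ ∈ implSet h, ∀ C₂ ∈ implSet h, ∀ v, Resolvable C₁ C₂ v →
    resolventOf C₁ C₂ v ∈ Xs → C₁ ∈ Xs ∧ C₂ ∈ Xs

/-- The set of variables occurring in a CNF. -/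
def varsOf [DecidableEq V] (Φ : Finset (Clause V)) : Finset V :=
  Φ.biUnion fun C => C.pos ∪ C.neg


/-- A Label Cover instance: a bipartite graph with parts `X` and `Y` and edge set `E`,
label sets `A` (for `X`-vertices) and `B` (for `Y`-vertices), and a nonempty
constraint relation `cst e ⊆ A × B` for every edge `e ∈ E`. -/
structure LabelCover (X Y A B : Type*) where
  E : Finset (X × Y)
  cst : X × Y → Finset (A × B)
  cst_nonempty : ∀ e ∈ E, (cst e).Nonempty

namespace LabelCover

variable {X Y A B : Type*}

/-- A labeling `(f, g)` covers an edge `(x,y)` if for every label `b ∈ g y` there is a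
label `a ∈ f x` with `(a, b)` admissible for the edge. -/
def Covers (I : LabelCover X Y A B) (f : X → Finset A) (g : Y → Finset B)
    (e : X × Y) : Prop :=
  ∀ b ∈ g e.2, ∃ a ∈ f e.1, (a, b) ∈ I.cst e

/-- A total-cover: a labeling (assigning a nonempty label set to every `Y`-vertex)
covering every edge. -/
def IsTotalCover (I : LabelCover X Y A B) (f : X → Finset A) (g : Y → Finset B) : Prop :=
  (∀ y, (g y).Nonempty) ∧ ∀ e ∈ I.E, I.Covers f g e

/-- A total-cover is tight if every `Y`-vertex receives exactly one label. -/
def Tight (g : Y → Finset B) : Prop := ∀ y, (g y).card = 1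

end LabelCover

/-- The cost of a labeling: the average number of labels assigned to `X`-vertices. -/
def lcCost {X A : Type*} [Fintype X] (f : X → Finset A) : ℚ :=
  (∑ x, ((f x).card : ℚ)) / (Fintype.card X : ℚ)


/-- The labels of the refined Label Cover instance: `L ∪ L′`, where `L = ⋃_x L_x`
with `L_x = {x} × A` and `L′ = ⋃_y L′_y` with `L′_y = {y} × B`. -/
abbrev Lab (X Y A B : Type*) := (X × A) ⊕ (Y × B)

/-- The propositional variables of the canonical pure Horn CNF construction:
`u ℓ` for labels `ℓ ∈ L ∪ L′`, `e x y i` and `el x y ℓ′ i` for edges `(x,y)`,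
labels `ℓ′ ∈ L′_y` and indices `i ∈ [d]`, and `v j` for `j ∈ [t]`. -/
inductive PV (X Y A B : Type*) where
  | u : Lab X Y A B → PV X Y A B
  | e : X → Y → ℕ → PV X Y A B
  | el : X → Y → B → ℕ → PV X Y A B
  | v : ℕ → PV X Y A B
deriving DecidableEq

section Canonical

variable {X Y A B : Type*} [Fintype X] [Fintype Y] [Fintype A] [Fintype B]
  [DecidableEq X] [DecidableEq Y] [DecidableEq A] [DecidableEq B]

/-- The (open) neighborhood `N(y) = {z ∈ X : (z,y) ∈ E}`. -/
def Nbr (I : LabelCover X Y A B) (y : Y) : Finset X :=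
  Finset.univ.filter fun z => (z, y) ∈ I.E

/-- Clauses (a): `u(ℓ) ∧ u(ℓ′) → e(x,y,ℓ′,i)` for `(x,y) ∈ E`, `(ℓ,ℓ′) ∈ Π_{(x,y)}`,
`i ∈ [d]`. -/
def clA (I : LabelCover X Y A B) (d : ℕ) : Finset (Clause (PV X Y A B)) :=
  (I.E ×ˢ Finset.Icc 1 d).biUnion fun p =>
    (I.cst p.1).image fun ab =>
      ⟨{PV.el p.1.1 p.1.2 ab.2 p.2},
       {PV.u (Sum.inl (p.1.1, ab.1)), PV.u (Sum.inr (p.1.2, ab.2))}⟩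

/-- Clauses (b): `⋀_{z ∈ N(y)} e(z,y,ℓ′,i) → e(x,y,i)` for `(x,y) ∈ E`, `ℓ′ ∈ L′_y`,
`i ∈ [d]`. -/
def clB (I : LabelCover X Y A B) (d : ℕ) : Finset (Clause (PV X Y A B)) :=
  ((I.E ×ˢ (Finset.univ : Finset B)) ×ˢ Finset.Icc 1 d).image fun p =>
    ⟨{PV.e p.1.1.1 p.1.1.2 p.2},
     (Nbr I p.1.1.2).image fun z => PV.el z p.1.1.2 p.1.2 p.2⟩

/-- Clauses (c): `e(x,y,i) → e(x,y,ℓ′,i)` for `(x,y) ∈ E`, `ℓ′ ∈ L′_y`, `i ∈ [d]`. -/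
def clC (I : LabelCover X Y A B) (d : ℕ) : Finset (Clause (PV X Y A B)) :=
  ((I.E ×ˢ (Finset.univ : Finset B)) ×ˢ Finset.Icc 1 d).image fun p =>
    ⟨{PV.el p.1.1.1 p.1.1.2 p.1.2 p.2}, {PV.e p.1.1.1 p.1.1.2 p.2}⟩

/-- The common body of the clauses (d): all variables `e(x,y,i)`, `(x,y) ∈ E`, `i ∈ [d]`. -/
def bigBody (I : LabelCover X Y A B) (d : ℕ) : Finset (PV X Y A B) :=
  (I.E ×ˢ Finset.Icc 1 d).image fun p => PV.e p.1.1 p.1.2 p.2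

/-- Clauses (d): `⋀_{i ∈ [d]} ⋀_{(x,y) ∈ E} e(x,y,i) → u(ℓ)` for `ℓ ∈ L ∪ L′`. -/
def clD (I : LabelCover X Y A B) (d : ℕ) : Finset (Clause (PV X Y A B)) :=
  (Finset.univ : Finset (Lab X Y A B)).image fun ℓ => ⟨{PV.u ℓ}, bigBody I d⟩

/-- Clauses (e): `v(j) → u(ℓ)` for `j ∈ [t]`, `ℓ ∈ L ∪ L′`. -/
def clE (X Y A B : Type*) [Fintype X] [Fintype Y] [Fintype A] [Fintype B]
    [DecidableEq X] [DecidableEq Y] [DecidableEq A] [DecidableEq B]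
    (t : ℕ) : Finset (Clause (PV X Y A B)) :=
  (Finset.Icc 1 t ×ˢ (Finset.univ : Finset (Lab X Y A B))).image fun p =>
    ⟨{PV.u p.2}, {PV.v p.1}⟩

/-- The canonical formula `Ψ`: clauses of types (a)–(d). -/
def PsiCNF (I : LabelCover X Y A B) (d : ℕ) : Finset (Clause (PV X Y A B)) :=
  clA I d ∪ clB I d ∪ clC I d ∪ clD I d

/-- The canonical formula `Φ`: clauses of types (a)–(e). -/
def PhiCNF (I : LabelCover X Y A B) (d t : ℕ) : Finset (Clause (PV X Y A B)) :=
  PsiCNF I d ∪ clE X Y A B t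

/-- The pure Horn function `h` represented by the canonical formula `Φ`. -/
def hFun (I : LabelCover X Y A B) (d t : ℕ) : (PV X Y A B → Bool) → Prop :=
  fun a => evalCNF (PhiCNF I d t) a

/-- The pure Horn function `g` represented by the canonical formula `Ψ`. -/
def gFun (I : LabelCover X Y A B) (d : ℕ) : (PV X Y A B → Bool) → Prop :=
  fun a => evalCNF (PsiCNF I d) a

end Canonical

/-!
The upper bound is minimality of `Θ` against `Ψ` itself. For the lower bound, two pure Horn
CNFs of the same function have the same heads: if `S → v` is a clause of one of them, the
forward chaining closure of `S` is a model in which `v` is true, and making `v` false violates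
`S → v`; only a clause of the other CNF with head `v` can tell these two assignments apart.
So `Θ` has at least as many clauses as `Ψ` has heads, while a clause of `Ψ` is determined by
its head and one label in `L ∪ L′`, so `Ψ` has at most `λ + λ′` clauses per head.
-/

section PureHorn

variable {V : Type*}

lemma subset_fcClosure (Φ : Finset (Clause V)) (Q : Set V) : Q ⊆ fcClosure Φ Q :=
  Set.subset_sInter fun _ hT => hT.1

lemma mem_fcClosure_of_neg_subset {Φ : Finset (Clause V)} {Q : Set V} {C : Clause V}
    (hC : C ∈ Φ) {v : V} (hv : C.pos = {v}) (hneg : ↑C.neg ⊆ fcClosure Φ Q) :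
    v ∈ fcClosure Φ Q :=
  Set.mem_sInter.mpr fun _ hT => hT.2 C hC v hv (hneg.trans (Set.sInter_subset_of_mem hT))

lemma evalCNF_of_iff_mem_fcClosure {Φ : Finset (Clause V)} (hΦ : IsPureHornCNF Φ) {Q : Set V}
    {a : V → Bool} (ha : ∀ w, a w = true ↔ w ∈ fcClosure Φ Q) : evalCNF Φ a := by
  intro C hC
  obtain ⟨v, hv⟩ := (hΦ C hC).2
  by_cases hneg : (↑C.neg : Set V) ⊆ fcClosure Φ Q
  · exact Or.inl ⟨v, by simp [hv], (ha v).mpr (mem_fcClosure_of_neg_subset hC hv hneg)⟩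
  · obtain ⟨w, hw, hwQ⟩ := Set.not_subset.mp hneg
    exact Or.inr ⟨w, hw, by simpa [← ha] using hwQ⟩

lemma Clause.mem_pos_of_eval_of_not_eval_update [DecidableEq V] {C : Clause V}
    {a : V → Bool} {v : V} (ha : C.eval a) (hv : a v = true)
    (h : ¬ C.eval (Function.update a v false)) : v ∈ C.pos := by
  rcases ha with ⟨w, hw, hwa⟩ | ⟨w, hw, hwa⟩
  · by_contra hvC
    have hwv : w ≠ v := by rintro rfl; exact hvC hw
    exact h (Or.inl ⟨w, hw, by rwa [Function.update_of_ne hwv]⟩)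
  · have hwv : w ≠ v := by rintro rfl; simp [hv] at hwa
    exact absurd (Or.inr ⟨w, hw, by rwa [Function.update_of_ne hwv]⟩) h

lemma IsPureHornCNF.exists_mem_pos [DecidableEq V] {Φ Θ : Finset (Clause V)}
    (hΦ : IsPureHornCNF Φ) (heq : ∀ a, evalCNF Θ a ↔ evalCNF Φ a) {C : Clause V} (hC : C ∈ Φ)
    {v : V} (hv : v ∈ C.pos) : ∃ D ∈ Θ, v ∈ D.pos := by
  classical
  obtain ⟨hdisj, v', hv'⟩ := hΦ C hC
  obtain rfl : v = v' := by simpa [hv'] using hv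
  let a : V → Bool := fun w => decide (w ∈ fcClosure Φ C.neg)
  have ha : evalCNF Φ a := evalCNF_of_iff_mem_fcClosure (Q := C.neg) hΦ (by simp [a])
  have hav : a v = true := by
    simpa [a] using mem_fcClosure_of_neg_subset hC hv' (subset_fcClosure _ _)
  have hC' : ¬ C.eval (Function.update a v false) := by
    rintro (⟨w, hw, hwa⟩ | ⟨w, hw, hwa⟩)
    · obtain rfl : w = v := by simpa [hv'] using hw
      simp at hwa
    · have hwv : w ≠ v := by
        rintro rfl; exact Finset.disjoint_left.mp hdisj hv hw
      rw [Function.update_of_ne hwv] at hwa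
      simp [a, subset_fcClosure Φ _ (Finset.mem_coe.mpr hw)] at hwa
  obtain ⟨D, hD, hDa⟩ : ∃ D ∈ Θ, ¬ D.eval (Function.update a v false) := by
    by_contra! h
    exact hC' ((heq _).mp h C hC)
  exact ⟨D, hD, Clause.mem_pos_of_eval_of_not_eval_update ((heq a).mpr ha D hD) hav hDa⟩

lemma IsPureHornCNF.biUnion_pos_subset [DecidableEq V] {Φ Θ : Finset (Clause V)}
    (hΦ : IsPureHornCNF Φ) (heq : ∀ a, evalCNF Θ a ↔ evalCNF Φ a) :
    Φ.biUnion Clause.pos ⊆ Θ.biUnion Clause.pos := fun v hv => by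
  obtain ⟨C, hC, hvC⟩ := Finset.mem_biUnion.mp hv
  obtain ⟨D, hD, hvD⟩ := hΦ.exists_mem_pos heq hC hvC
  exact Finset.mem_biUnion.mpr ⟨D, hD, hvD⟩

lemma IsPureHornCNF.card_biUnion_pos_le [DecidableEq V] {Θ : Finset (Clause V)}
    (hΘ : IsPureHornCNF Θ) : (Θ.biUnion Clause.pos).card ≤ Θ.card :=
  Finset.card_biUnion_le.trans_eq <| by
    rw [Finset.card_eq_sum_ones]
    refine Finset.sum_congr rfl fun D hD => ?_
    obtain ⟨w, hw⟩ := (hΘ D hD).2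
    simp [hw]

end PureHorn

section Canonical

variable {X Y A B : Type*} [Fintype X] [DecidableEq X] [DecidableEq Y] [DecidableEq A]
  [DecidableEq B]

/-- `inl a` selects the type (a) clause through `u(x, a)`, `inr b` the type (b) clause
through `ℓ′ = b`; heads of types (c) and (d) determine their clause. Pairs that label no
clause of `Ψ` get junk values. -/
def psiClause (I : LabelCover X Y A B) (d : ℕ) : PV X Y A B → A ⊕ B → Clause (PV X Y A B)
  | .el x y b i, .inl a => ⟨{.el x y b i}, {.u (.inl (x, a)), .u (.inr (y, b))}⟩
  | .el x y b i, .inr _ => ⟨{.el x y b i}, {.e x y i}⟩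
  | .e x y i, .inr b => ⟨{.e x y i}, (Nbr I y).image fun z => .el z y b i⟩
  | .u ℓ, _ => ⟨{.u ℓ}, bigBody I d⟩
  | w, _ => ⟨{w}, ∅⟩

lemma psiClause_pos (I : LabelCover X Y A B) (d : ℕ) (w : PV X Y A B) (t : A ⊕ B) :
    (psiClause I d w t).pos = {w} := by
  cases w <;> cases t <;> rfl

lemma psiClause_isClause (I : LabelCover X Y A B) (d : ℕ) (w : PV X Y A B) (t : A ⊕ B) :
    (psiClause I d w t).IsClause := by
  cases w <;> cases t <;> simp [psiClause, Clause.IsClause, bigBody]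

variable [Fintype Y] [Fintype A] [Fintype B]

lemma exists_psiClause_eq (I : LabelCover X Y A B) (d : ℕ) {C : Clause (PV X Y A B)}
    (hC : C ∈ PsiCNF I d) : ∃ w t, psiClause I d w t = C := by
  simp only [PsiCNF, Finset.mem_union, clA, clB, clC, clD, Finset.mem_biUnion,
    Finset.mem_image] at hC
  rcases hC with (((⟨⟨⟨x, y⟩, i⟩, -, ⟨a, b⟩, -, rfl⟩ | ⟨⟨⟨⟨x, y⟩, b⟩, i⟩, -, rfl⟩) |
    ⟨⟨⟨⟨x, y⟩, b⟩, i⟩, -, rfl⟩) | ⟨ℓ, -, rfl⟩)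
  · exact ⟨.el x y b i, .inl a, rfl⟩
  · exact ⟨.e x y i, .inr b, rfl⟩
  · exact ⟨.el x y b i, .inr b, rfl⟩
  · exact ⟨.u ℓ, Sum.map Prod.snd Prod.snd ℓ, rfl⟩

lemma isPureHornCNF_psiCNF (I : LabelCover X Y A B) (d : ℕ) : IsPureHornCNF (PsiCNF I d) := by
  intro C hC
  obtain ⟨w, t, rfl⟩ := exists_psiClause_eq I d hC
  exact ⟨psiClause_isClause I d w t, w, psiClause_pos I d w t⟩

lemma card_psiCNF_le (I : LabelCover X Y A B) (d : ℕ) :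
    (PsiCNF I d).card ≤
      ((PsiCNF I d).biUnion Clause.pos).card * (Fintype.card A + Fintype.card B) := by
  have hsub : PsiCNF I d ⊆ ((PsiCNF I d).biUnion Clause.pos ×ˢ Finset.univ).image
      fun p : PV X Y A B × (A ⊕ B) => psiClause I d p.1 p.2 := by
    intro C hC
    obtain ⟨w, t, rfl⟩ := exists_psiClause_eq I d hC
    refine Finset.mem_image.mpr ⟨(w, t), Finset.mem_product.mpr ⟨?_, Finset.mem_univ _⟩, rfl⟩
    exact Finset.mem_biUnion.mpr ⟨_, hC, by simp [psiClause_pos]⟩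
  calc (PsiCNF I d).card ≤ _ := Finset.card_le_card hsub
    _ ≤ _ := Finset.card_image_le
    _ = _ := by rw [Finset.card_product, Finset.card_univ, Fintype.card_sum]

end Canonical

theorem psi_clause_bounds_general
    {X Y A B : Type*} [Fintype X] [Fintype Y] [Fintype A] [Fintype B]
    [DecidableEq X] [DecidableEq Y] [DecidableEq A] [DecidableEq B]
    (I : LabelCover X Y A B) (d : ℕ)
    (Θ : Finset (Clause (PV X Y A B)))
    (hPH : IsPureHornCNF Θ)
    (hrep : Represents Θ (gFun I d))
    (hmin : ∀ Θ' : Finset (Clause (PV X Y A B)), IsPureHornCNF Θ' →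
      Represents Θ' (gFun I d) → Θ.card ≤ Θ'.card) :
    ((PsiCNF I d).card : ℚ) / ((Fintype.card A : ℚ) + (Fintype.card B : ℚ)) ≤
      (Θ.card : ℚ) ∧
    Θ.card ≤ (PsiCNF I d).card := by
  have hΨ : IsPureHornCNF (PsiCNF I d) := isPureHornCNF_psiCNF I d
  have hΨΘ : (PsiCNF I d).card ≤ Θ.card * (Fintype.card A + Fintype.card B) :=
    (card_psiCNF_le I d).trans <| Nat.mul_le_mul_right _ <|
      (Finset.card_le_card (hΨ.biUnion_pos_subset hrep)).trans hPH.card_biUnion_pos_le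
  refine ⟨div_le_of_le_mul₀ (by positivity) (Nat.cast_nonneg _) ?_, hmin _ hΨ fun _ => Iff.rfl⟩
  exact_mod_cast hΨΘ

/-- If `Θ` is a clause minimum prime pure Horn CNF representation of
the canonical exclusive-component function `g`, then
`|Ψ|_c/(λ+λ′) ≤ |Θ|_c ≤ |Ψ|_c`. -/
theorem psi_clause_bounds
    {X Y A B : Type*} [Fintype X] [Fintype Y] [Fintype A] [Fintype B]
    [DecidableEq X] [DecidableEq Y] [DecidableEq A] [DecidableEq B]
    [Nonempty X] [Nonempty Y]
    (I : LabelCover X Y A B) (d : ℕ) (hd : 1 ≤ d)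
    (hnoIsoX : ∀ x : X, ∃ y, (x, y) ∈ I.E)
    (hnoIsoY : ∀ y : Y, ∃ x, (x, y) ∈ I.E)
    (Θ : Finset (Clause (PV X Y A B)))
    (hPH : IsPureHornCNF Θ)
    (hprime : ∀ C ∈ Θ, PrimeImplicate (gFun I d) C)
    (hrep : Represents Θ (gFun I d))
    (hmin : ∀ Θ' : Finset (Clause (PV X Y A B)), IsPureHornCNF Θ' →
      Represents Θ' (gFun I d) → Θ.card ≤ Θ'.card) :
    ((PsiCNF I d).card : ℚ) / ((Fintype.card A : ℚ) + (Fintype.card B : ℚ)) ≤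
      (Θ.card : ℚ) ∧
    Θ.card ≤ (PsiCNF I d).card :=
  psi_clause_bounds_general I d Θ hPH hrep hmin
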